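/- arXiv:0908.1967 — 8 statements merged into one kernel-verified Lean document; each statement's English description precedes it below -/
import Mathlib

section
/- For a standard word w of length n and index i with 1 ≤ i ≤ n-1, the following are equivalent: (a) cocharge(w s_i) = cocharge(w), and (b) |w_i - w_{i+1}| ≠ 1, where w s_i denotes the word obtained from w by swapping the entries in positions i and i+1. -/
/-! The label of an entry `k` counts the `v < k` for which `v + 1` stands to the left of `v`.
Swapping adjacent positions holding `a` and `b` changes the relative order of `a` and `b` only,
so no label changes unless `|a - b| = 1`. If `b = a + 1`, the swap puts `a + 1` to the left of
`a`, which raises the label of every entry `> a` by one; since `a + 1` is itself an entry, the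
cocharge strictly increases. The case `a = b + 1` is the same swap undone. -/

/-- `w` is a standard word of length `n`: a permutation of `1, …, n`. -/
def IsStandardWord (n : ℕ) (w : List ℕ) : Prop :=
  w.Perm ((List.range n).map (· + 1))

/-- The cocharge label of the entry `i` of the standard word `w`:
the entry `1` is labeled `0`, and the entry `i+1` gets the label of `i`,
incremented by `1` exactly when `i+1` appears to the left of `i` in `w`. -/
def entryLabel (w : List ℕ) : ℕ → ℕ
  | 0 => 0
  | 1 => 0
  | i + 2 => entryLabel w (i + 1) + (if w.idxOf (i + 2) < w.idxOf (i + 1) then 1 else 0)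

/-- The cocharge labeling of `w`: each letter of `w` is replaced by its label. -/
def cochargeLabeling (w : List ℕ) : List ℕ := w.map (entryLabel w)

/-- The cocharge of `w`: the sum of the entries of its cocharge labeling. -/
def cocharge (w : List ℕ) : ℕ := (cochargeLabeling w).sum

/-- Swap the entries of `w` in (0-indexed) positions `j` and `j+1`. -/
def swapAdj (w : List ℕ) (j : ℕ) : List ℕ :=
  (w.set j (w.getD (j + 1) 0)).set (j + 1) (w.getD j 0)

namespace List

theorem exists_eq_append_cons_cons {α : Type*} {l : List α} {j : ℕ} (hj : j + 1 < l.length) :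
    ∃ l₁ a b l₂, l = l₁ ++ a :: b :: l₂ ∧ l₁.length = j := by
  refine ⟨l.take j, l[j], l[j + 1], l.drop (j + 2), ?_, by simp; omega⟩
  rw [getElem_cons_drop, getElem_cons_drop, take_append_drop]

variable {α : Type*} [DecidableEq α] {l₁ l₂ : List α} {a b x y : α}

theorem idxOf_lt_idxOf_of_append_cons_cons (h : (l₁ ++ a :: b :: l₂).Nodup) :
    (l₁ ++ a :: b :: l₂).idxOf a < (l₁ ++ a :: b :: l₂).idxOf b := by
  simp only [nodup_append, nodup_cons, mem_cons] at h
  have ha : a ∉ l₁ := fun ha => h.2.2 a ha a (.inl rfl) rfl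
  have hb : b ∉ l₁ := fun hb => h.2.2 b hb b (.inr (.inl rfl)) rfl
  have hab : a ≠ b := fun e => h.2.1.1 (.inl e)
  simp [idxOf_append, ha, hb, hab]

theorem idxOf_lt_idxOf_swap_iff (h : (l₁ ++ a :: b :: l₂).Nodup)
    (hab : ¬(x = a ∧ y = b)) (hba : ¬(x = b ∧ y = a)) :
    (l₁ ++ b :: a :: l₂).idxOf x < (l₁ ++ b :: a :: l₂).idxOf y ↔
      (l₁ ++ a :: b :: l₂).idxOf x < (l₁ ++ a :: b :: l₂).idxOf y := by
  simp only [nodup_append, nodup_cons, mem_cons] at h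
  have hx := idxOf_lt_length_of_mem (l := l₁) (a := x)
  have hy := idxOf_lt_length_of_mem (l := l₁) (a := y)
  simp only [idxOf_append, idxOf_cons, cond_eq_ite, beq_iff_eq]
  split_ifs <;> simp_all <;> omega

end List

theorem IsStandardWord.nodup {n : ℕ} {w : List ℕ} (hw : IsStandardWord n w) : w.Nodup :=
  hw.nodup_iff.2 <| List.nodup_range.map (add_left_injective 1)

theorem IsStandardWord.one_le_of_mem {n : ℕ} {w : List ℕ} (hw : IsStandardWord n w) {v : ℕ}
    (hv : v ∈ w) : 1 ≤ v := by
  obtain ⟨k, -, rfl⟩ := List.mem_map.1 (hw.subset hv)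
  omega

theorem swapAdj_append_cons_cons (l₁ l₂ : List ℕ) (a b : ℕ) :
    swapAdj (l₁ ++ a :: b :: l₂) l₁.length = l₁ ++ b :: a :: l₂ := by
  simp [swapAdj, List.set_append_right]

theorem entryLabel_congr {w w' : List ℕ}
    (h : ∀ k, w'.idxOf (k + 2) < w'.idxOf (k + 1) ↔ w.idxOf (k + 2) < w.idxOf (k + 1)) :
    entryLabel w' = entryLabel w := by
  funext v
  induction v using entryLabel.induct with
  | case1 | case2 => rfl
  | case3 k ih => simp only [entryLabel, ih, h]

theorem entryLabel_eq_add_of_inversion {w w' : List ℕ} {a : ℕ} (ha : 1 ≤ a)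
    (hw : w.idxOf a < w.idxOf (a + 1)) (hw' : w'.idxOf (a + 1) < w'.idxOf a)
    (h : ∀ k, k + 1 ≠ a →
      (w'.idxOf (k + 2) < w'.idxOf (k + 1) ↔ w.idxOf (k + 2) < w.idxOf (k + 1))) (v : ℕ) :
    entryLabel w' v = entryLabel w v + if a < v then 1 else 0 := by
  induction v using entryLabel.induct with
  | case1 => rfl
  | case2 => rw [if_neg (by omega)]; rfl
  | case3 k ih =>
    simp only [entryLabel, ih]
    obtain rfl | hk := eq_or_ne (k + 1) a
    · simp [hw', hw.not_gt]
    · simp only [h k hk]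
      split_ifs <;> omega

theorem cocharge_lt_cocharge_swap {l₁ l₂ : List ℕ} {a : ℕ} (ha : 1 ≤ a)
    (hnd : (l₁ ++ a :: (a + 1) :: l₂).Nodup) :
    cocharge (l₁ ++ a :: (a + 1) :: l₂) < cocharge (l₁ ++ (a + 1) :: a :: l₂) := by
  have hperm : (l₁ ++ (a + 1) :: a :: l₂).Perm (l₁ ++ a :: (a + 1) :: l₂) :=
    (List.Perm.swap a (a + 1) l₂).append_left l₁
  have hlabel := entryLabel_eq_add_of_inversion ha (List.idxOf_lt_idxOf_of_append_cons_cons hnd)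
    (List.idxOf_lt_idxOf_of_append_cons_cons (hperm.nodup_iff.2 hnd))
    (fun k hk => List.idxOf_lt_idxOf_swap_iff hnd (by omega) (by omega))
  simp only [cocharge, cochargeLabeling, (hperm.map _).sum_eq]
  exact List.sum_lt_sum _ _ (fun v _ => by simp [hlabel]) ⟨a + 1, by simp, by simp [hlabel]⟩

theorem cocharge_swap_eq {l₁ l₂ : List ℕ} {a b : ℕ} (hnd : (l₁ ++ a :: b :: l₂).Nodup)
    (hab : b ≠ a + 1) (hba : a ≠ b + 1) :
    cocharge (l₁ ++ b :: a :: l₂) = cocharge (l₁ ++ a :: b :: l₂) := by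
  have hperm : (l₁ ++ b :: a :: l₂).Perm (l₁ ++ a :: b :: l₂) :=
    (List.Perm.swap a b l₂).append_left l₁
  have hlabel := entryLabel_congr fun k => List.idxOf_lt_idxOf_swap_iff hnd (by omega) (by omega)
  simp only [cocharge, cochargeLabeling, hlabel, (hperm.map _).sum_eq]

theorem cocharge_swap_eq_iff {l₁ l₂ : List ℕ} {a b : ℕ} (ha : 1 ≤ a) (hb : 1 ≤ b)
    (hnd : (l₁ ++ a :: b :: l₂).Nodup) :
    cocharge (l₁ ++ b :: a :: l₂) = cocharge (l₁ ++ a :: b :: l₂) ↔ b ≠ a + 1 ∧ a ≠ b + 1 := by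
  refine ⟨fun h => ⟨?_, ?_⟩, fun h => cocharge_swap_eq hnd h.1 h.2⟩
  · rintro rfl
    exact (cocharge_lt_cocharge_swap ha hnd).ne' h
  · rintro rfl
    have hnd' := ((List.Perm.swap (b + 1) b l₂).append_left l₁).nodup_iff.2 hnd
    exact (cocharge_lt_cocharge_swap hb hnd').ne h

/-- For a standard word `w` of length `n` and `1 ≤ i ≤ n - 1`, swapping the
entries in positions `i` and `i + 1` preserves cocharge if and only if these
entries do not differ by exactly `1`.  (Positions are 1-indexed; `swapAdj w
(i - 1)` swaps the 1-indexed positions `i` and `i + 1`, whose entries are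
`w.getD (i - 1) 0` and `w.getD i 0`.) -/
theorem cocharge_swap_iff (n : ℕ) (w : List ℕ) (hw : IsStandardWord n w)
    (i : ℕ) (hi1 : 1 ≤ i) (hi2 : i ≤ n - 1) :
    cocharge (swapAdj w (i - 1)) = cocharge w ↔
      ((w.getD (i - 1) 0 : ℤ) - (w.getD i 0 : ℤ)).natAbs ≠ 1 := by
  have hlen : w.length = n := by simpa using hw.length_eq
  obtain ⟨l₁, a, b, l₂, rfl, hl₁⟩ :=
    List.exists_eq_append_cons_cons (l := w) (j := i - 1) (by omega)
  obtain rfl : i = l₁.length + 1 := by omega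
  rw [Nat.add_sub_cancel, swapAdj_append_cons_cons, cocharge_swap_eq_iff
    (hw.one_le_of_mem (by simp)) (hw.one_le_of_mem (by simp)) hw.nodup]
  have hga : (l₁ ++ a :: b :: l₂).getD l₁.length 0 = a := by simp
  have hgb : (l₁ ++ a :: b :: l₂).getD (l₁.length + 1) 0 = b := by simp
  rw [hga, hgb]
  omega
end

section
/- For a standard word w with cocharge labeling z, if |z_i - z_{i+1}| > 1 then swapping positions i and i+1 preserves cocharge, i.e., cocharge(w s_i) = cocharge(w). -/
/-! Cocharge is the sum of the labels over the letters of `w`, so it is unchanged by a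
rearrangement of `w` that keeps every label. The label of `k + 2` is determined by the label of
`k + 1` and by whether `k + 2` stands left of `k + 1`. Swapping two adjacent letters reverses
the relative order of those two letters only, and they are not consecutive integers, since
consecutive integers have labels differing by at most one. -/

lemma natAbs_entryLabel_succ_sub_le_one (w : List ℕ) (k : ℕ) :
    ((entryLabel w (k + 1) : ℤ) - entryLabel w k).natAbs ≤ 1 := by
  cases k with
  | zero => simp [entryLabel]
  | succ k => rw [entryLabel]; split <;> simp

lemma entryLabel_eq_of_idxOf_lt_iff {w w' : List ℕ}
    (h : ∀ k, w'.idxOf (k + 2) < w'.idxOf (k + 1) ↔ w.idxOf (k + 2) < w.idxOf (k + 1)) :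
    ∀ i, entryLabel w' i = entryLabel w i
  | 0 => rfl
  | 1 => rfl
  | k + 2 => by simp only [entryLabel, h k, entryLabel_eq_of_idxOf_lt_iff h (k + 1)]

lemma cocharge_eq_of_perm_of_entryLabel_eq {w w' : List ℕ} (hp : w'.Perm w)
    (hl : entryLabel w' = entryLabel w) : cocharge w' = cocharge w := by
  rw [cocharge, cochargeLabeling, hl]
  exact (hp.map _).sum_eq

lemma swap_apply_lt_swap_apply_iff {j p q : ℕ} (h : ¬(p = j ∧ q = j + 1))
    (h' : ¬(q = j ∧ p = j + 1)) :
    Equiv.swap j (j + 1) p < Equiv.swap j (j + 1) q ↔ p < q := by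
  simp only [Equiv.swap_apply_def]
  split_ifs <;> omega

section swapAdj

variable {w : List ℕ} {j : ℕ}

lemma length_swapAdj : (swapAdj w j).length = w.length := by
  simp [swapAdj]

lemma getElem?_swapAdj (hj : j + 1 < w.length) (i : ℕ) :
    (swapAdj w j)[i]? = w[Equiv.swap j (j + 1) i]? := by
  obtain rfl | rfl | ⟨hij, hij1⟩ : i = j ∨ i = j + 1 ∨ (i ≠ j ∧ i ≠ j + 1) := by omega
  · simp [swapAdj, hj, show i < w.length by omega]
  · simp [swapAdj, hj, show j < w.length by omega]
  · rw [Equiv.swap_apply_of_ne_of_ne hij hij1]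
    simp [swapAdj, Ne.symm hij, Ne.symm hij1]

lemma swapAdj_eq_take_append (hj : j + 1 < w.length) :
    swapAdj w j = w.take j ++ w[j + 1] :: w[j] :: w.drop (j + 2) := by
  rw [swapAdj, List.getD_eq_getElem _ _ hj, List.getD_eq_getElem _ _ (by omega : j < w.length),
    List.set_eq_take_cons_drop (l := w) (n := j) _ (by omega),
    List.set_append_right _ _ (by simp), show j + 1 - (w.take j).length = 1 by simp; omega,
    List.set_cons_succ, List.drop_eq_getElem_cons hj]
  rfl

lemma swapAdj_perm (hj : j + 1 < w.length) : (swapAdj w j).Perm w := by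
  have hsplit : w = w.take j ++ w[j] :: w[j + 1] :: w.drop (j + 2) := by
    rw [← List.drop_eq_getElem_cons, ← List.drop_eq_getElem_cons, List.take_append_drop]
  rw [swapAdj_eq_take_append hj]
  conv_rhs => rw [hsplit]
  exact (List.Perm.swap _ _ _).append_left _

lemma idxOf_swapAdj (hw : w.Nodup) (hj : j + 1 < w.length) (v : ℕ) :
    (swapAdj w j).idxOf v = Equiv.swap j (j + 1) (w.idxOf v) := by
  by_cases hv : v ∈ w
  · have hget : (swapAdj w j)[Equiv.swap j (j + 1) (w.idxOf v)]? = some v := by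
      rw [getElem?_swapAdj hj, Equiv.swap_apply_self,
        List.getElem?_eq_getElem (List.idxOf_lt_length_iff.mpr hv), List.getElem_idxOf]
    obtain ⟨hlt, hget⟩ := List.getElem?_eq_some_iff.mp hget
    have := ((swapAdj_perm hj).nodup_iff.mpr hw).idxOf_getElem _ hlt
    rwa [hget] at this
  · have hv' : v ∉ swapAdj w j := fun h => hv ((swapAdj_perm hj).subset h)
    rw [List.idxOf_eq_length hv, List.idxOf_eq_length hv', length_swapAdj,
      Equiv.swap_apply_of_ne_of_ne] <;> omega

lemma entryLabel_swapAdj (hw : w.Nodup) (hj : j + 1 < w.length)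
    (hz : 1 < ((entryLabel w w[j] : ℤ) - entryLabel w w[j + 1]).natAbs) :
    entryLabel (swapAdj w j) = entryLabel w := by
  have consecutive_not_swapped : ∀ k, ¬(w.idxOf (k + 2) = j ∧ w.idxOf (k + 1) = j + 1) ∧
      ¬(w.idxOf (k + 1) = j ∧ w.idxOf (k + 2) = j + 1) := by
    intro k
    have hk : ((entryLabel w (k + 2) : ℤ) - entryLabel w (k + 1)).natAbs ≤ 1 :=
      natAbs_entryLabel_succ_sub_le_one w (k + 1)
    constructor
    all_goals
      rintro ⟨h₁, h₂⟩
      subst h₁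
      simp only [← h₂, List.getElem_idxOf] at hz
      omega
  funext i
  refine entryLabel_eq_of_idxOf_lt_iff (fun k => ?_) i
  rw [idxOf_swapAdj hw hj, idxOf_swapAdj hw hj]
  exact swap_apply_lt_swap_apply_iff (consecutive_not_swapped k).1 (consecutive_not_swapped k).2

end swapAdj

/-- Catabolism transformations preserve cocharge: if the adjacent entries
`z_j, z_{j+1}` (0-indexed) of the cocharge labeling `z` of a standard word `w`
differ by more than `1`, then swapping positions `j` and `j + 1` of `w`
preserves cocharge. -/
theorem cocharge_catabolism_transformation (n : ℕ) (w : List ℕ)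
    (hw : IsStandardWord n w) (j : ℕ) (hj : j + 1 < n)
    (h : 1 < (((cochargeLabeling w).getD j 0 : ℤ) -
      ((cochargeLabeling w).getD (j + 1) 0 : ℤ)).natAbs) :
    cocharge (swapAdj w j) = cocharge w := by
  have hjw : j + 1 < w.length := by simpa [hw.length_eq] using hj
  have hnodup : w.Nodup := hw.nodup_iff.mpr (List.nodup_range.map (add_left_injective 1))
  have hz : 1 < ((entryLabel w w[j] : ℤ) - entryLabel w w[j + 1]).natAbs := by
    simpa [cochargeLabeling, List.getD_eq_getElem?_getD, hjw, show j < w.length by omega] using h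
  exact cocharge_eq_of_perm_of_entryLabel_eq (swapAdj_perm hjw) (entryLabel_swapAdj hnodup hjw hz)
end

section
/- A word z in nonnegative integers is the cocharge labeling of some standard word if and only if there exists l ≥ 0 such that: the number c_i of occurrences of i in z is positive for all i in [0,l], c_i = 0 for all i > l, and for every i in [1,l] some occurrence of i appears strictly to the left of some occurrence of i-1 in z. -/
lemma entryLabel_succ (w : List ℕ) {i : ℕ} (hi : 1 ≤ i) :
    entryLabel w (i + 1) = entryLabel w i + if w.idxOf (i + 1) < w.idxOf i then 1 else 0 := by
  obtain ⟨j, rfl⟩ := Nat.exists_eq_add_of_le' hi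
  rfl

lemma entryLabel_succ_le (w : List ℕ) (i : ℕ) : entryLabel w (i + 1) ≤ entryLabel w i + 1 := by
  rcases Nat.eq_zero_or_pos i with rfl | hi
  · simp [entryLabel]
  · rw [entryLabel_succ w hi]
    split <;> omega

lemma entryLabel_mono (w : List ℕ) : Monotone (entryLabel w) := by
  refine monotone_nat_of_le_succ fun i => ?_
  rcases Nat.eq_zero_or_pos i with rfl | hi
  · simp [entryLabel]
  · rw [entryLabel_succ w hi]
    omega

lemma exists_lt_le_succ_of_lt_of_le (f : ℕ → ℕ) {a b k : ℕ} (hab : a ≤ b) (ha : f a < k)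
    (hb : k ≤ f b) : ∃ i, a ≤ i ∧ i < b ∧ f i < k ∧ k ≤ f (i + 1) := by
  induction b, hab using Nat.le_induction with
  | base => omega
  | succ b hab ih =>
    by_cases hfb : f b < k
    · exact ⟨b, hab, b.lt_succ_self, hfb, hb⟩
    · obtain ⟨i, hai, hib, hfi, hfi'⟩ := ih (not_lt.1 hfb)
      exact ⟨i, hai, hib.trans b.lt_succ_self, hfi, hfi'⟩

lemma exists_descent_of_le_entryLabel (w : List ℕ) {n k : ℕ} (hk : 1 ≤ k)
    (hkn : k ≤ entryLabel w n) :
    ∃ i, 1 ≤ i ∧ i < n ∧ w.idxOf (i + 1) < w.idxOf i ∧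
      entryLabel w i = k - 1 ∧ entryLabel w (i + 1) = k := by
  have hn : 1 ≤ n := by
    rcases Nat.eq_zero_or_pos n with rfl | hn
    · simp [entryLabel] at hkn; omega
    · exact hn
  obtain ⟨i, hi, hin, hlt, hle⟩ :=
    exists_lt_le_succ_of_lt_of_le (entryLabel w) hn (by simp [entryLabel]; omega) hkn
  have hstep := entryLabel_succ w hi
  refine ⟨i, hi, hin, ?_, ?_, ?_⟩
  · by_contra hnot
    rw [if_neg hnot] at hstep
    omega
  all_goals have := entryLabel_succ_le w i; omega

lemma mem_of_isStandardWord {n : ℕ} {w : List ℕ} (hw : IsStandardWord n w) {x : ℕ} :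
    x ∈ w ↔ 1 ≤ x ∧ x ≤ n := by
  rw [hw.mem_iff, List.mem_map]
  constructor
  · rintro ⟨r, hr, rfl⟩
    rw [List.mem_range] at hr
    omega
  · rintro ⟨h1, h2⟩
    exact ⟨x - 1, List.mem_range.2 (by omega), by omega⟩

lemma mem_cochargeLabeling_of_isStandardWord {n : ℕ} {w : List ℕ} (hw : IsStandardWord n w)
    {k : ℕ} : k ∈ cochargeLabeling w ↔ ∃ x, (1 ≤ x ∧ x ≤ n) ∧ entryLabel w x = k := by
  simp only [cochargeLabeling, List.mem_map, mem_of_isStandardWord hw]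

lemma getD_cochargeLabeling_idxOf {w : List ℕ} {x : ℕ} (hx : x ∈ w) :
    (cochargeLabeling w).getD (w.idxOf x) 0 = entryLabel w x := by
  have hlt := List.idxOf_lt_length_iff.2 hx
  rw [List.getD_eq_getElem _ _ (by simpa [cochargeLabeling] using hlt)]
  simp [cochargeLabeling, List.getElem_idxOf hlt]

structure IsCochargeLabelingShape (z : List ℕ) (l : ℕ) : Prop where
  count_pos : ∀ i ≤ l, 0 < z.count i
  count_eq_zero : ∀ i, l < i → z.count i = 0
  exists_descent : ∀ i, 1 ≤ i → i ≤ l →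
    ∃ p q, p < q ∧ q < z.length ∧ z.getD p 0 = i ∧ z.getD q 0 = i - 1

theorem isCochargeLabelingShape_cochargeLabeling {n : ℕ} {w : List ℕ}
    (hw : IsStandardWord n w) (hn : 1 ≤ n) :
    IsCochargeLabelingShape (cochargeLabeling w) (entryLabel w n) where
  count_pos k hk := by
    rw [List.count_pos_iff, mem_cochargeLabeling_of_isStandardWord hw]
    rcases Nat.eq_zero_or_pos k with rfl | hk0
    · exact ⟨1, ⟨le_rfl, hn⟩, rfl⟩
    · obtain ⟨i, -, hin, -, -, hi⟩ := exists_descent_of_le_entryLabel w hk0 hk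
      exact ⟨i + 1, ⟨by omega, by omega⟩, hi⟩
  count_eq_zero k hk := by
    rw [List.count_eq_zero, mem_cochargeLabeling_of_isStandardWord hw]
    rintro ⟨x, ⟨-, hxn⟩, rfl⟩
    exact absurd (entryLabel_mono w hxn) (not_le.2 hk)
  exists_descent k hk hkn := by
    obtain ⟨i, hi, hin, hidx, hlabel, hlabel'⟩ := exists_descent_of_le_entryLabel w hk hkn
    have hmem : i ∈ w := (mem_of_isStandardWord hw).2 ⟨hi, hin.le⟩
    have hmem' : i + 1 ∈ w := (mem_of_isStandardWord hw).2 ⟨by omega, hin⟩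
    refine ⟨w.idxOf (i + 1), w.idxOf i, hidx, ?_, ?_, ?_⟩
    · simpa [cochargeLabeling] using List.idxOf_lt_length_iff.2 hmem
    · rw [getD_cochargeLabeling_idxOf hmem', hlabel']
    · rw [getD_cochargeLabeling_idxOf hmem, hlabel]

lemma List.Pairwise.apply_getElem_le_of_le {α β : Type*} [Preorder β] {f : α → β}
    {l : List α} (hl : l.Pairwise fun a b => f a < f b) {i j : ℕ} (hj : j < l.length)
    (hij : i ≤ j) : f (l[i]'(hij.trans_lt hj)) ≤ f l[j] := by
  rcases hij.eq_or_lt with rfl | hij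
  · rfl
  · exact (List.pairwise_iff_getElem.1 hl i j _ hj hij).le

lemma List.Pairwise.apply_le_or_le_of_mem {α β : Type*} [Preorder β] {f : α → β}
    {l : List α} (hl : l.Pairwise fun a b => f a < f b) {j : ℕ} (hj : j + 1 < l.length)
    {x : α} (hx : x ∈ l) : f x ≤ f l[j] ∨ f l[j + 1] ≤ f x := by
  obtain ⟨m, hm, rfl⟩ := List.getElem_of_mem hx
  rcases le_or_gt m j with hmj | hmj
  · exact Or.inl (hl.apply_getElem_le_of_le _ hmj)
  · exact Or.inr (hl.apply_getElem_le_of_le hm hmj)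

def invWord (u : List ℕ) : List ℕ := (List.range u.length).map (u.idxOf · + 1)

lemma map_idxOf_self {u : List ℕ} (hu : u.Nodup) : u.map u.idxOf = List.range u.length :=
  List.ext_getElem (by simp) fun i _ hi => by simp [hu.idxOf_getElem i (by simpa using hi)]

lemma isStandardWord_invWord {n : ℕ} {u : List ℕ} (hu : u.Perm (List.range n)) :
    IsStandardWord n (invWord u) := by
  have hlen : u.length = n := by simpa using hu.length_eq
  have hperm : ((List.range n).map u.idxOf).Perm (List.range n) := by
    simpa [map_idxOf_self (hu.nodup_iff.2 List.nodup_range), hlen] using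
      hu.symm.map u.idxOf
  simpa [IsStandardWord, invWord, hlen, List.map_map, Function.comp_def] using
    hperm.map (· + 1)

lemma idxOf_invWord {n : ℕ} {u : List ℕ} (hu : u.Perm (List.range n)) {j : ℕ}
    (hj : j < u.length) : (invWord u).idxOf (j + 1) = u[j] := by
  have hlen : u.length = n := by simpa using hu.length_eq
  have huj : u[j] < (invWord u).length := by
    simpa [invWord, hlen] using hu.subset (List.getElem_mem hj)
  have hget : (invWord u)[u[j]] = j + 1 := by
    simp [invWord, (hu.nodup_iff.2 List.nodup_range).idxOf_getElem j hj]
  rw [← hget]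
  exact (isStandardWord_invWord hu).nodup_iff.2
    (List.nodup_range.map fun _ _ h => by simpa using h) |>.idxOf_getElem _ huj

def labelKey (z : List ℕ) (p : ℕ) : ℕ ×ₗ ℕ := toLex (z.getD p 0, p)

lemma labelKey_injective (z : List ℕ) : Function.Injective (labelKey z) :=
  fun _ _ h => congrArg (fun x => (ofLex x).2) h

def sortedPositions (z : List ℕ) : List ℕ :=
  (List.range z.length).mergeSort fun p q => labelKey z p ≤ labelKey z q

def standardize (z : List ℕ) : List ℕ := invWord (sortedPositions z)

lemma sortedPositions_perm (z : List ℕ) : (sortedPositions z).Perm (List.range z.length) :=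
  List.mergeSort_perm _ _

lemma length_sortedPositions (z : List ℕ) : (sortedPositions z).length = z.length := by
  simpa using (sortedPositions_perm z).length_eq

lemma getElem_sortedPositions_lt (z : List ℕ) {j : ℕ} (hj : j < (sortedPositions z).length) :
    (sortedPositions z)[j] < z.length :=
  List.mem_range.1 ((sortedPositions_perm z).subset (List.getElem_mem hj))

lemma sortedPositions_pairwise (z : List ℕ) :
    (sortedPositions z).Pairwise fun p q => labelKey z p < labelKey z q := by
  have hle := List.pairwise_mergeSort (le := fun p q => labelKey z p ≤ labelKey z q)
    (by simpa using fun _ _ _ => le_trans) (by simpa using fun a b => le_total _ _)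
    (List.range z.length)
  have hne := (sortedPositions_perm z).nodup_iff.2 List.nodup_range
  exact (hle.and hne).imp fun ⟨hpq, hne⟩ =>
    lt_of_le_of_ne (by simpa using hpq) ((labelKey_injective z).ne hne)

lemma isStandardWord_standardize (z : List ℕ) : IsStandardWord z.length (standardize z) :=
  isStandardWord_invWord (sortedPositions_perm z)

namespace IsCochargeLabelingShape

variable {z : List ℕ} {l : ℕ}

lemma getD_eq_of_labelKey_consecutive (h : IsCochargeLabelingShape z l) {p q : ℕ}
    (hq : q < z.length) (hpq : labelKey z p < labelKey z q)
    (hgap : ∀ r < z.length, labelKey z r ≤ labelKey z p ∨ labelKey z q ≤ labelKey z r) :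
    z.getD q 0 = z.getD p 0 + if q < p then 1 else 0 := by
  simp only [labelKey, Prod.Lex.toLex_le_toLex, Prod.Lex.toLex_lt_toLex] at hpq hgap
  rcases hpq with hlt | ⟨heq, hpq⟩
  · have hql : z.getD q 0 ≤ l := by
      by_contra! hlq
      have hcount := h.count_eq_zero _ hlq
      rw [List.getD_eq_getElem _ _ hq, List.count_eq_zero] at hcount
      exact hcount (List.getElem_mem hq)
    obtain ⟨P, Q, hPQ, hQ, hzP, hzQ⟩ := h.exists_descent (z.getD p 0 + 1) (by omega) (by omega)
    -- `z[P] = z[p] + 1` forces `z[q] = z[p] + 1` and `q ≤ P`, while `z[Q] = z[p]` forces `Q ≤ p`.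
    have hgapP := hgap P (by omega)
    have hgapQ := hgap Q hQ
    rw [if_pos (by omega)]
    omega
  · rw [if_neg (by omega)]
    omega

lemma entryLabel_standardize (h : IsCochargeLabelingShape z l) {j : ℕ}
    (hj : j < (sortedPositions z).length) :
    entryLabel (standardize z) (j + 1) = z.getD (sortedPositions z)[j] 0 := by
  have hsorted := sortedPositions_pairwise z
  induction j with
  | zero =>
    obtain ⟨r, hr, hzr⟩ := List.getElem_of_mem (List.count_pos_iff.1 (h.count_pos 0 l.zero_le))
    have hrmem : r ∈ sortedPositions z := (sortedPositions_perm z).mem_iff.2 (by simpa using hr)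
    obtain ⟨m, hm, rfl⟩ := List.getElem_of_mem hrmem
    have hmin := hsorted.apply_getElem_le_of_le hm m.zero_le
    simp only [labelKey, Prod.Lex.toLex_le_toLex, List.getD_eq_getElem _ _ hr, hzr] at hmin
    show 0 = _
    omega
  | succ j ih =>
    rw [entryLabel_succ _ j.succ_pos, ih (by omega), standardize,
      idxOf_invWord (sortedPositions_perm z) hj, idxOf_invWord (sortedPositions_perm z) (by omega)]
    refine (h.getD_eq_of_labelKey_consecutive ?_ (List.pairwise_iff_getElem.1 hsorted _ _ _ _
      j.lt_succ_self) fun r hr => ?_).symm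
    · exact getElem_sortedPositions_lt z hj
    · exact hsorted.apply_le_or_le_of_mem hj
        ((sortedPositions_perm z).mem_iff.2 (List.mem_range.2 hr))

theorem cochargeLabeling_standardize (h : IsCochargeLabelingShape z l) :
    cochargeLabeling (standardize z) = z := by
  refine List.ext_getElem (by simp [cochargeLabeling, standardize, invWord,
    length_sortedPositions]) fun p hp hpz => ?_
  have hj : (sortedPositions z).idxOf p < (sortedPositions z).length :=
    List.idxOf_lt_length_iff.2 ((sortedPositions_perm z).mem_iff.2 (List.mem_range.2 hpz))
  have hw : (standardize z)[p]'(by simpa [cochargeLabeling] using hp) =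
      (sortedPositions z).idxOf p + 1 := by
    simp [standardize, invWord]
  simp only [cochargeLabeling, List.getElem_map, hw]
  rw [h.entryLabel_standardize hj, List.getElem_idxOf hj, List.getD_eq_getElem _ _ hpz]

end IsCochargeLabelingShape

/-- A nonempty word `z` of nonnegative integers is the cocharge labeling of a
standard word if and only if there is an `l ≥ 0` such that every `i ∈ [0, l]`
occurs in `z`, no `i > l` occurs in `z`, and for every `i ∈ [1, l]` some
occurrence of `i` lies strictly to the left of some occurrence of `i - 1`. -/
theorem cochargeLabeling_characterization (z : List ℕ) (hz : z ≠ []) :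
    (∃ n w, IsStandardWord n w ∧ cochargeLabeling w = z) ↔
      ∃ l : ℕ,
        (∀ i ≤ l, 0 < z.count i) ∧
        (∀ i, l < i → z.count i = 0) ∧
        (∀ i, 1 ≤ i → i ≤ l →
          ∃ p q, p < q ∧ q < z.length ∧ z.getD p 0 = i ∧ z.getD q 0 = i - 1) := by
  constructor
  · rintro ⟨n, w, hw, rfl⟩
    have hn : 1 ≤ n := Nat.pos_of_ne_zero fun hn => hz <| by
      subst hn
      simp_all [IsStandardWord, cochargeLabeling]
    obtain ⟨hpos, hzero, hdesc⟩ := isCochargeLabelingShape_cochargeLabeling hw hn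
    exact ⟨_, hpos, hzero, hdesc⟩
  · rintro ⟨l, hpos, hzero, hdesc⟩
    exact ⟨_, _, isStandardWord_standardize z,
      IsCochargeLabelingShape.cochargeLabeling_standardize ⟨hpos, hzero, hdesc⟩⟩
end

section
/- A standard word is uniquely determined by its cocharge labeling; that is, if two standard words of the same length have equal cocharge labelings, they are equal. -/
/-! Order the entries `i ∈ {1, …, n}` of a standard word by the pair (label of `i`, position of
`i`), lexicographically. This key increases from `i` to `i + 1`: either the label grows, or it
stays and `i + 1` lies to the right of `i`. So the entry at position `p` is one more than the
number of positions `q` whose pair (label at `q`, `q`) is smaller than (label at `p`, `p`), a count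
read off from the labeling alone. -/

open Finset

def cochargeKey (w : List ℕ) (i : ℕ) : ℕ ×ₗ ℕ :=
  toLex (entryLabel w i, w.idxOf i)

theorem cochargeKey_lt_succ {w : List ℕ} {i : ℕ} (hi : 1 ≤ i) (hmem : i ∈ w) (hmem' : i + 1 ∈ w) :
    cochargeKey w i < cochargeKey w (i + 1) := by
  obtain ⟨m, rfl⟩ : ∃ m, i = m + 1 := ⟨i - 1, by omega⟩
  have hne : w.idxOf (m + 1) ≠ w.idxOf (m + 2) := fun e ↦ by
    have := (List.idxOf_inj hmem).mp e
    omega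
  rw [show m + 1 + 1 = m + 2 from rfl]
  simp only [cochargeKey, entryLabel, Prod.Lex.toLex_lt_toLex]
  split_ifs <;> omega

namespace IsStandardWord

variable {n : ℕ} {w : List ℕ}

theorem length_eq (h : IsStandardWord n w) : w.length = n := by
  simpa using List.Perm.length_eq h

theorem nodup_s4 (h : IsStandardWord n w) : w.Nodup :=
  List.Perm.nodup_iff h |>.mpr <| List.nodup_range.map fun _ _ ↦ Nat.add_right_cancel

theorem mem_iff (h : IsStandardWord n w) {x : ℕ} : x ∈ w ↔ x ∈ Set.Icc 1 n := by
  rw [List.Perm.mem_iff h, List.mem_map]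
  simp only [List.mem_range, Set.mem_Icc]
  constructor
  · rintro ⟨a, ha, rfl⟩
    omega
  · rintro ⟨h1, h2⟩
    exact ⟨x - 1, by omega, by omega⟩

theorem getD_mem_Icc (h : IsStandardWord n w) {p : ℕ} (hp : p < n) :
    w.getD p 0 ∈ Set.Icc 1 n := by
  rw [List.getD_eq_getElem _ _ (h.length_eq ▸ hp), ← h.mem_iff]
  exact List.getElem_mem _

theorem idxOf_getD (h : IsStandardWord n w) {p : ℕ} (hp : p < n) : w.idxOf (w.getD p 0) = p := by
  rw [List.getD_eq_getElem _ _ (h.length_eq ▸ hp)]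
  exact h.nodup_s4.idxOf_getElem p _

theorem strictMonoOn_cochargeKey (h : IsStandardWord n w) :
    StrictMonoOn (cochargeKey w) (Set.Icc 1 n) :=
  strictMonoOn_of_lt_succ Set.ordConnected_Icc fun i _ hi hi' ↦ by
    rw [Order.succ_eq_add_one] at hi' ⊢
    exact cochargeKey_lt_succ hi.1 (h.mem_iff.mpr hi) (h.mem_iff.mpr hi')

theorem cochargeKey_getD (h : IsStandardWord n w) {p : ℕ} (hp : p < n) :
    cochargeKey w (w.getD p 0) = toLex ((cochargeLabeling w).getD p 0, p) := by
  have hpw : p < w.length := h.length_eq ▸ hp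
  rw [cochargeKey, h.idxOf_getD hp, cochargeLabeling, List.getD_eq_getElem _ _ hpw,
    List.getD_eq_getElem _ _ (by simpa using hpw), List.getElem_map]

theorem getD_lt_getD_iff (h : IsStandardWord n w) {p q : ℕ} (hp : p < n) (hq : q < n) :
    w.getD q 0 < w.getD p 0 ↔
      toLex ((cochargeLabeling w).getD q 0, q) < toLex ((cochargeLabeling w).getD p 0, p) := by
  rw [← h.cochargeKey_getD hp, ← h.cochargeKey_getD hq,
    h.strictMonoOn_cochargeKey.lt_iff_lt (h.getD_mem_Icc hq) (h.getD_mem_Icc hp)]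

theorem getD_eq_card_add_one (h : IsStandardWord n w) {p : ℕ} (hp : p < n) :
    w.getD p 0 = #{q ∈ range n | w.getD q 0 < w.getD p 0} + 1 := by
  have hcard : #{q ∈ range n | w.getD q 0 < w.getD p 0} = #(Ico 1 (w.getD p 0)) := by
    refine card_bij (fun q _ ↦ w.getD q 0) ?_ ?_ ?_
    · intro q hq
      rw [mem_filter, mem_range] at hq
      exact mem_Ico.mpr ⟨(h.getD_mem_Icc hq.1).1, hq.2⟩
    · intro a ha b hb hab
      rw [mem_filter, mem_range] at ha hb
      rw [← h.idxOf_getD ha.1, ← h.idxOf_getD hb.1, hab]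
    · intro x hx
      rw [mem_Ico] at hx
      have hxw : x ∈ w := h.mem_iff.mpr ⟨hx.1, hx.2.le.trans (h.getD_mem_Icc hp).2⟩
      have hidx : w.idxOf x < w.length := List.idxOf_lt_length_iff.mpr hxw
      have hget : w.getD (w.idxOf x) 0 = x := by
        rw [List.getD_eq_getElem _ _ hidx, List.getElem_idxOf]
      refine ⟨w.idxOf x, ?_, hget⟩
      rw [mem_filter, mem_range, hget, ← h.length_eq]
      exact ⟨hidx, hx.2⟩
  rw [hcard, Nat.card_Ico]
  have := (h.getD_mem_Icc hp).1
  omega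

end IsStandardWord

/-- A standard word is determined by its cocharge labeling. -/
theorem eq_of_cochargeLabeling_eq (n : ℕ) (u v : List ℕ)
    (hu : IsStandardWord n u) (hv : IsStandardWord n v)
    (h : cochargeLabeling u = cochargeLabeling v) : u = v := by
  refine List.ext_getElem (hu.length_eq.trans hv.length_eq.symm) fun p hpu hpv ↦ ?_
  have hp : p < n := hu.length_eq ▸ hpu
  rw [← List.getD_eq_getElem _ 0 hpu, ← List.getD_eq_getElem _ 0 hpv,
    hu.getD_eq_card_add_one hp, hv.getD_eq_card_add_one hp]
  congr 2
  refine filter_congr fun q hq ↦ ?_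
  rw [hu.getD_lt_getD_iff hp (mem_range.mp hq), hv.getD_lt_getD_iff hp (mem_range.mp hq), h]
end

section
/- If the catabolism insertion algorithm applied to a standard word of length n terminates with final partition F(w), then F(w) is a partition of n (the parts sum to n). -/
/-- `ν` is a partition, presented as its (0-indexed) sequence of parts:
weakly decreasing with finitely many nonzero parts. -/
def IsPartitionFn (ν : ℕ → ℕ) : Prop :=
  (∀ i, ν (i + 1) ≤ ν i) ∧ ∃ N, ∀ i, N ≤ i → ν i = 0

/-- `incr ν a` is `ν + ε_{a+1}`: increment the part of (1-indexed) index `a+1`,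
i.e. the part with 0-indexed index `a`. -/
def incr (ν : ℕ → ℕ) (a : ℕ) : ℕ → ℕ := fun i => if i = a then ν a + 1 else ν i

open Classical in
/-- One step of the catabolism insertion algorithm: present the last letter `a`
of the word to the partition; insert it if `ν + ε_{a+1}` is a partition,
and otherwise corotate, prepending `a + 1` to the word. -/
noncomputable def step (s : List ℕ × (ℕ → ℕ)) : List ℕ × (ℕ → ℕ) :=
  match s.1.getLast? with
  | none => s
  | some a =>
      if IsPartitionFn (incr s.2 a) then (s.1.dropLast, incr s.2 a)
      else ((a + 1) :: s.1.dropLast, s.2)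

/-- The catabolism insertion algorithm, run on the standard word `w` starting
from `(cochargeLabeling w, ∅)`, terminates with empty word and partition `ν`;
i.e. `F w = ν`. -/
def Outputs (w : List ℕ) (ν : ℕ → ℕ) : Prop :=
  ∃ k : ℕ, step^[k] (cochargeLabeling w, fun _ => 0) = ([], ν)

theorem incr_apply (ν : ℕ → ℕ) (a i : ℕ) : incr ν a i = ν i + if i = a then 1 else 0 := by
  unfold incr
  split_ifs with h <;> simp [h]

theorem sum_range_incr (ν : ℕ → ℕ) {a N : ℕ} (ha : a < N) :
    ∑ i ∈ Finset.range N, incr ν a i = ∑ i ∈ Finset.range N, ν i + 1 := by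
  simp only [incr_apply, Finset.sum_add_distrib, Finset.sum_ite_eq', Finset.mem_range, ha, if_true]

theorem lt_of_incr_eq_zero {ν : ℕ → ℕ} {a N : ℕ} (hN : ∀ i, N ≤ i → incr ν a i = 0) : a < N := by
  by_contra! h
  simpa [incr] using hN a h

theorem eq_zero_of_incr_eq_zero {ν : ℕ → ℕ} {a N : ℕ} (hN : ∀ i, N ≤ i → incr ν a i = 0) :
    ∀ i, N ≤ i → ν i = 0 := fun i hi => by
  simpa [incr_apply, (lt_of_incr_eq_zero hN).trans_le hi |>.ne'] using hN i hi

/-- Each step of the algorithm either moves the last letter of the word into the partition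
(only when the result is again a partition) or replaces it by another letter, so the length
of the word plus the size of the partition never changes. -/
def CatabolismInvariant (n : ℕ) (s : List ℕ × (ℕ → ℕ)) : Prop :=
  IsPartitionFn s.2 ∧
    ∀ N, (∀ i, N ≤ i → s.2 i = 0) → s.1.length + ∑ i ∈ Finset.range N, s.2 i = n

namespace CatabolismInvariant

theorem init {n : ℕ} {w : List ℕ} (hw : IsStandardWord n w) :
    CatabolismInvariant n (cochargeLabeling w, fun _ => 0) :=
  ⟨⟨fun _ => le_rfl, 0, fun _ _ => rfl⟩, fun _ _ => by simpa [cochargeLabeling] using hw.length_eq⟩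

theorem step {n : ℕ} {s : List ℕ × (ℕ → ℕ)} (h : CatabolismInvariant n s) :
    CatabolismInvariant n (step s) := by
  rcases hlast : s.1.getLast? with _ | a
  · simpa only [_root_.step, hlast] using h
  obtain ⟨hpart, hsize⟩ := h
  have hlen : 0 < s.1.length := List.length_pos_iff.mpr (by rintro h; simp [h] at hlast)
  by_cases hins : IsPartitionFn (incr s.2 a)
  · simp only [_root_.step, hlast, if_pos hins]
    refine ⟨hins, fun N hN => ?_⟩
    have hbefore := hsize N (eq_zero_of_incr_eq_zero hN)
    rw [List.length_dropLast, sum_range_incr _ (lt_of_incr_eq_zero hN)]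
    omega
  · simp only [_root_.step, hlast, if_neg hins]
    refine ⟨hpart, fun N hN => ?_⟩
    have hbefore := hsize N hN
    simp only [List.length_cons, List.length_dropLast]
    omega

theorem iterate_step {n : ℕ} {s : List ℕ × (ℕ → ℕ)} (h : CatabolismInvariant n s) (k : ℕ) :
    CatabolismInvariant n (_root_.step^[k] s) := by
  induction k with
  | zero => exact h
  | succ k ih => rw [Function.iterate_succ_apply']; exact ih.step

end CatabolismInvariant

/-- If the catabolism insertion algorithm applied to a standard word of length
`n` terminates with final partition `ν = F w`, then `ν` is a partition whose
parts sum to `n`. -/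
theorem output_is_partition_of_n (n : ℕ) (w : List ℕ)
    (hw : IsStandardWord n w) (ν : ℕ → ℕ) (hout : Outputs w ν) :
    IsPartitionFn ν ∧
      ∀ N, (∀ i, N ≤ i → ν i = 0) → ∑ i ∈ Finset.range N, ν i = n := by
  obtain ⟨k, hk⟩ := hout
  have hfinal := (CatabolismInvariant.init hw).iterate_step k
  rw [hk] at hfinal
  exact ⟨hfinal.1, fun N hN => by simpa using hfinal.2 N hN⟩
end

section
/- Catabolism insertion is invariant under catabolism transformations: if u and v are standard words with cocharge labelings that differ by swapping two adjacent entries z_i, z_{i+1} with |z_i - z_{i+1}| > 1, then F(u) = F(v). -/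
/-! The letters of the word are presented to the partition from the right. Call two states
related when they share a partition and their words differ by swapping adjacent letters `a`, `b`
with `|a - b| > 1`. If the swapped pair is not at the end of the word, one step treats both
states alike and keeps them related. If it is at the end, two steps present `a` and `b` in
either order; since rows `a` and `b` are neither equal nor adjacent, adding a box in one of them
does not change whether a box fits in the other, so both orders reach the same state, unless both
letters are corotated, which leaves `a + 1`, `b + 1` swapped at the front: related again. As the
terminal state `([], ν)` is fixed by `step`, related states terminate with the same partition. -/

lemma isPartitionFn_incr_iff {ν : ℕ → ℕ} (hν : IsPartitionFn ν) (a : ℕ) :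
    IsPartitionFn (incr ν a) ↔ ∀ m, a = m + 1 → ν a < ν m := by
  obtain ⟨hmono, N, hN⟩ := hν
  constructor
  · rintro ⟨hmono', -⟩ m rfl
    simpa [incr] using hmono' m
  · intro h
    refine ⟨fun i => ?_, max N (a + 1), fun i hi => ?_⟩
    · by_cases hi : i + 1 = a
      · have := h i hi.symm
        subst hi
        simp only [incr, if_true, if_neg (Nat.succ_ne_self i).symm]
        omega
      · have := hmono i
        simp only [incr, if_neg hi]
        split_ifs with hia
        · subst hia; omega
        · exact this
    · simp only [incr, if_neg (show i ≠ a by omega)]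
      exact hN i (le_of_max_le_left hi)

lemma incr_comm (ν : ℕ → ℕ) {a b : ℕ} (h : a ≠ b) :
    incr (incr ν a) b = incr (incr ν b) a := by
  funext i
  simp only [incr]
  split_ifs <;> simp_all

lemma isPartitionFn_incr_incr_iff {ν : ℕ → ℕ} (hν : IsPartitionFn ν) {a b : ℕ}
    (hb : IsPartitionFn (incr ν b)) (hab : a ≠ b) (hab' : a ≠ b + 1) :
    IsPartitionFn (incr (incr ν b) a) ↔ IsPartitionFn (incr ν a) := by
  rw [isPartitionFn_incr_iff hb, isPartitionFn_incr_iff hν]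
  refine forall_congr' fun m => imp_congr_right fun hm => ?_
  simp [incr, hab, show m ≠ b by omega]

open Classical in
lemma step_append_singleton (P : List ℕ) (a : ℕ) (ν : ℕ → ℕ) :
    step (P ++ [a], ν) =
      if IsPartitionFn (incr ν a) then (P, incr ν a) else ((a + 1) :: P, ν) := by
  simp [step]

open Classical in
lemma step_step_append_pair {ν : ℕ → ℕ} (hν : IsPartitionFn ν) (P : List ℕ) {a b : ℕ}
    (hab : a ≠ b) (hab' : a ≠ b + 1) :
    step^[2] (P ++ [a, b], ν) =
      if IsPartitionFn (incr ν b) then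
        if IsPartitionFn (incr ν a) then (P, incr (incr ν b) a) else ((a + 1) :: P, incr ν b)
      else
        if IsPartitionFn (incr ν a) then ((b + 1) :: P, incr ν a)
        else ((a + 1) :: (b + 1) :: P, ν) := by
  rw [show P ++ [a, b] = P ++ [a] ++ [b] by simp, Function.iterate_succ_apply,
    Function.iterate_one, step_append_singleton]
  by_cases hb : IsPartitionFn (incr ν b)
  · rw [if_pos hb, if_pos hb, step_append_singleton, isPartitionFn_incr_incr_iff hν hb hab hab']
  · rw [if_neg hb, if_neg hb, ← List.cons_append, step_append_singleton]

inductive CatabolismSwap : List ℕ × (ℕ → ℕ) → List ℕ × (ℕ → ℕ) → Prop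
  | mk (P S : List ℕ) {a b : ℕ} (hab : 1 < ((a : ℤ) - b).natAbs) {ν : ℕ → ℕ}
      (hν : IsPartitionFn ν) : CatabolismSwap (P ++ a :: b :: S, ν) (P ++ b :: a :: S, ν)

namespace CatabolismSwap

lemma symm {s t : List ℕ × (ℕ → ℕ)} (h : CatabolismSwap s t) : CatabolismSwap t s := by
  obtain ⟨P, S, hab, hν⟩ := h
  exact mk P S (by omega) hν

lemma word_ne_nil {s t : List ℕ × (ℕ → ℕ)} (h : CatabolismSwap s t) : s.1 ≠ [] := by
  obtain ⟨P, S, -, -⟩ := h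
  simp

lemma step_append (P S : List ℕ) {a b : ℕ} (hab : 1 < ((a : ℤ) - b).natAbs)
    {ν : ℕ → ℕ} (hν : IsPartitionFn ν) (c : ℕ) :
    CatabolismSwap (step (P ++ a :: b :: (S ++ [c]), ν))
      (step (P ++ b :: a :: (S ++ [c]), ν)) := by
  simp only [← List.cons_append, ← List.append_assoc]
  rw [step_append_singleton, step_append_singleton]
  split_ifs with hc
  · exact mk P S hab hc
  · simpa using mk ((c + 1) :: P) S hab hν

lemma exists_iterate_step {s t : List ℕ × (ℕ → ℕ)} (h : CatabolismSwap s t) :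
    ∃ i, 0 < i ∧ (step^[i] s = step^[i] t ∨ CatabolismSwap (step^[i] s) (step^[i] t)) := by
  obtain @⟨P, S, a, b, hab, ν, hν⟩ := h
  rcases S.eq_nil_or_concat' with rfl | ⟨S, c, rfl⟩
  · refine ⟨2, two_pos, ?_⟩
    rw [step_step_append_pair hν P (by omega) (by omega),
      step_step_append_pair hν P (by omega) (by omega)]
    split_ifs
    · exact Or.inl (by rw [incr_comm ν (by omega)])
    all_goals first
      | exact Or.inl rfl
      | exact Or.inr (mk [] P (by omega) hν)
  · exact ⟨1, one_pos, Or.inr (step_append P S hab hν c)⟩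

end CatabolismSwap

lemma swapAdj_append_length (P S : List ℕ) (a b : ℕ) :
    swapAdj (P ++ a :: b :: S) P.length = P ++ b :: a :: S := by
  induction P with
  | nil => rfl
  | cons p P ih => exact congrArg (p :: ·) ih

lemma catabolismSwap_swapAdj {x : List ℕ} {j : ℕ} (hj : j + 1 < x.length)
    (hgap : 1 < ((x.getD j 0 : ℤ) - (x.getD (j + 1) 0 : ℤ)).natAbs)
    {ν : ℕ → ℕ} (hν : IsPartitionFn ν) :
    CatabolismSwap (x, ν) (swapAdj x j, ν) := by
  obtain ⟨P, S, a, b, rfl, rfl⟩ : ∃ P S a b, x = P ++ a :: b :: S ∧ P.length = j :=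
    ⟨x.take j, x.drop (j + 2), x[j], x[j + 1], by simp, by simp; omega⟩
  rw [swapAdj_append_length]
  exact .mk P S (by simpa using hgap) hν

def Reaches (s : List ℕ × (ℕ → ℕ)) (ν : ℕ → ℕ) : Prop :=
  ∃ k, step^[k] s = ([], ν)

lemma iterate_step_of_le {s : List ℕ × (ℕ → ℕ)} {ν : ℕ → ℕ} {k i : ℕ}
    (hk : step^[k] s = ([], ν)) (hki : k ≤ i) : step^[i] s = ([], ν) := by
  rw [← Nat.sub_add_cancel hki, Function.iterate_add_apply, hk, Function.iterate_fixed rfl]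

lemma reaches_iterate_step_iff {s : List ℕ × (ℕ → ℕ)} {ν : ℕ → ℕ} (i : ℕ) :
    Reaches (step^[i] s) ν ↔ Reaches s ν := by
  constructor
  · rintro ⟨k, hk⟩
    exact ⟨k + i, by rwa [Function.iterate_add_apply]⟩
  · rintro ⟨k, hk⟩
    refine ⟨k, ?_⟩
    rw [← Function.iterate_add_apply, iterate_step_of_le hk (Nat.le_add_right k i)]

lemma CatabolismSwap.reaches {s t : List ℕ × (ℕ → ℕ)} {ν : ℕ → ℕ} (h : CatabolismSwap s t)
    (hs : Reaches s ν) : Reaches t ν := by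
  obtain ⟨k, hk⟩ := hs
  induction k using Nat.strong_induction_on generalizing s t with
  | _ k ih =>
  obtain ⟨i, hi, heq | hswap⟩ := h.exists_iterate_step
  · rw [← reaches_iterate_step_iff i, ← heq, reaches_iterate_step_iff]
    exact ⟨k, hk⟩
  · rw [← reaches_iterate_step_iff i]
    by_cases hik : i ≤ k
    · refine ih (k - i) (by omega) hswap ?_
      rwa [← Function.iterate_add_apply, Nat.sub_add_cancel hik]
    · exact absurd (by rw [iterate_step_of_le hk (by omega)]) hswap.word_ne_nil

theorem outputs_catabolism_transformation_general (n : ℕ) (u v : List ℕ)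
    (hu : IsStandardWord n u)
    (j : ℕ) (hj : j + 1 < n)
    (hswap : cochargeLabeling v = swapAdj (cochargeLabeling u) j)
    (hgap : 1 < (((cochargeLabeling u).getD j 0 : ℤ) -
      ((cochargeLabeling u).getD (j + 1) 0 : ℤ)).natAbs) :
    ∀ ν : ℕ → ℕ, Outputs u ν ↔ Outputs v ν := by
  intro ν
  have hlen : j + 1 < (cochargeLabeling u).length := by
    simpa [cochargeLabeling, hu.length_eq] using hj
  have hempty : IsPartitionFn (fun _ => 0) := ⟨fun _ => le_rfl, 0, fun _ _ => rfl⟩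
  have h := catabolismSwap_swapAdj hlen hgap hempty
  rw [← hswap] at h
  exact ⟨h.reaches, h.symm.reaches⟩

/-- Catabolism insertion is invariant under catabolism transformations: if the
cocharge labelings of the standard words `u` and `v` differ by swapping two
adjacent entries (0-indexed positions `j`, `j + 1`) that differ by more than
`1`, then `F u = F v`. -/
theorem outputs_catabolism_transformation (n : ℕ) (u v : List ℕ)
    (hu : IsStandardWord n u) (hv : IsStandardWord n v)
    (j : ℕ) (hj : j + 1 < n)
    (hswap : cochargeLabeling v = swapAdj (cochargeLabeling u) j)
    (hgap : 1 < (((cochargeLabeling u).getD j 0 : ℤ) -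
      ((cochargeLabeling u).getD (j + 1) 0 : ℤ)).natAbs) :
    ∀ ν : ℕ → ℕ, Outputs u ν ↔ Outputs v ν :=
  outputs_catabolism_transformation_general n u v hu j hj hswap hgap
end

section
/- For the word w with cocharge labeling equal to the row reading word of Z_λ (reading rows bottom to top: λ_l copies of l-1, ..., λ_2 copies of 1, λ_1 copies of 0, for a partition λ of n with l parts), I_k(w̃) = λ_1 + λ_2 + ... + λ_k for every k ≥ 1. -/
/-- The extension `w̃ : ℤ_{≤ n} → ℤ_{≥ 0}` of the cocharge labeling `z` of `w`:
`w̃ i = z_{i + k n} + k` where `k` is the unique integer with `i + k n ∈ [1, n]`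
(defined on all of `ℤ`; only values at `i ≤ n` are relevant). -/
def extFn (w : List ℕ) (n : ℕ) (i : ℤ) : ℤ :=
  ((cochargeLabeling w).getD ((i - 1).emod (n : ℤ)).toNat 0 : ℤ) - (i - 1).fdiv (n : ℤ)

/-- `j` (restricted to indices `0, …, k'`) is a chain of `g` of length `k' + 1`:
`j_{k'} < ⋯ < j_0` are integers `≤ n` with `g (j_i) = i` and pairwise distinct
residues mod `n`. -/
def IsChainOf (g : ℤ → ℤ) (n : ℕ) (k' : ℕ) (j : ℕ → ℤ) : Prop :=
  (∀ i ≤ k', j i ≤ (n : ℤ)) ∧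
  (∀ i, i + 1 ≤ k' → j (i + 1) < j i) ∧
  (∀ i ≤ k', g (j i) = (i : ℤ)) ∧
  (∀ i i', i ≤ k' → i' ≤ k' → i ≠ i' → j i % (n : ℤ) ≠ j i' % (n : ℤ))

/-- A `k`-bounded chain family of `g`: finitely many chains of `g`, each of
length at most `k`, whose residue sets mod `n` are pairwise disjoint. -/
structure BddChainFamily (g : ℤ → ℤ) (n k : ℕ) where
  /-- the number of chains -/
  L : ℕ
  /-- `len t + 1` is the length of the `t`-th chain -/
  len : Fin L → ℕ
  /-- the `t`-th chain -/
  j : Fin L → ℕ → ℤ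
  chain : ∀ t, IsChainOf g n (len t) (j t)
  bdd : ∀ t, len t + 1 ≤ k
  disj : ∀ t t', t ≠ t' → ∀ i i', i ≤ len t → i' ≤ len t' →
    j t i % (n : ℤ) ≠ j t' i' % (n : ℤ)

/-- The size of a chain family: the cardinality of its support, the union of
the underlying sets of its chains. -/
def BddChainFamily.size {g : ℤ → ℤ} {n k : ℕ} (A : BddChainFamily g n k) : ℕ :=
  ((Finset.univ : Finset (Fin A.L)).biUnion
    (fun t => (Finset.range (A.len t + 1)).image (A.j t))).card

/-- `I_k(g)`: the maximum size of a `k`-bounded chain family of `g`. -/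
noncomputable def Ik (g : ℤ → ℤ) (n k : ℕ) : ℕ :=
  sSup {m | ∃ A : BddChainFamily g n k, A.size = m}

/-- The affine simple reflection `s_d` (for `1 ≤ d ≤ n - 1`): it transposes
`d + k n` and `d + 1 + k n` for every integer `k`. -/
def affSwap (n d : ℕ) (m : ℤ) : ℤ :=
  if m % (n : ℤ) = (d : ℤ) % (n : ℤ) then m + 1
  else if m % (n : ℤ) = ((d : ℤ) + 1) % (n : ℤ) then m - 1
  else m
/-!
The residues of the elements of a `k`-bounded chain family are distinct, and an element `x ≤ n`
with `w̃ x = i < k` sits over the position `(x - 1) mod n`, whose label is at most `i` because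
below `n` the shift `w̃ x - z` is nonnegative. So the residues inject into the positions labelled `< k`,
of which there are `λ_1 + ⋯ + λ_k`. Conversely, inside `[1, n]` the row of `i + 1` lies to the
left of the row of `i`, so the columns of the first `k` rows of the diagram are chains, and
together they cover exactly those positions.
-/

open Finset

theorem lt_card_filter_range_iff {P : ℕ → Prop} [DecidablePred P]
    (hP : ∀ ⦃a b⦄, a ≤ b → P b → P a) {i k : ℕ} :
    i < ((range k).filter P).card ↔ i < k ∧ P i := by
  constructor
  · intro h
    by_contra! hi
    have hsub : (range k).filter P ⊆ range i := by
      intro m hm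
      simp only [mem_filter, mem_range] at hm ⊢
      by_contra! him
      exact hi (by omega) (hP him hm.2)
    have := card_le_card hsub
    simp only [card_range] at this
    omega
  · rintro ⟨hik, hPi⟩
    have hsub : range (i + 1) ⊆ (range k).filter P := by
      intro m hm
      simp only [mem_filter, mem_range] at hm ⊢
      exact ⟨by omega, hP (by omega) hPi⟩
    simpa using card_le_card hsub

theorem eq_of_natCast_add_one_emod_eq {n p p' : ℕ} (hp : p < n) (hp' : p' < n)
    (h : ((p : ℤ) + 1) % n = ((p' : ℤ) + 1) % n) : p = p' := by
  have h' : (p : ℤ) % n = (p' : ℤ) % n := Int.ModEq.add_right_cancel' 1 h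
  rw [Int.emod_eq_of_lt (by positivity) (by exact_mod_cast hp),
    Int.emod_eq_of_lt (by positivity) (by exact_mod_cast hp')] at h'
  exact_mod_cast h'

namespace BddChainFamily

variable {g : ℤ → ℤ} {n k : ℕ}

def support (A : BddChainFamily g n k) : Finset ℤ :=
  univ.biUnion fun t => (range (A.len t + 1)).image (A.j t)

theorem mem_support {A : BddChainFamily g n k} {x : ℤ} :
    x ∈ A.support ↔ ∃ t, ∃ i ≤ A.len t, A.j t i = x := by
  simp [support]

theorem le_of_mem_support {A : BddChainFamily g n k} {x : ℤ} (hx : x ∈ A.support) :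
    x ≤ n := by
  obtain ⟨t, i, hi, rfl⟩ := mem_support.1 hx
  exact (A.chain t).1 i hi

theorem apply_lt_of_mem_support {A : BddChainFamily g n k} {x : ℤ} (hx : x ∈ A.support) :
    g x < k := by
  obtain ⟨t, i, hi, rfl⟩ := mem_support.1 hx
  rw [(A.chain t).2.2.1 i hi]
  have := A.bdd t
  omega

theorem injOn_emod_support (A : BddChainFamily g n k) :
    Set.InjOn (· % (n : ℤ)) A.support := by
  intro x hx y hy hxy
  obtain ⟨t, i, hi, rfl⟩ := mem_support.1 hx
  obtain ⟨t', i', hi', rfl⟩ := mem_support.1 hy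
  by_contra hne
  obtain rfl | htt := eq_or_ne t t'
  · exact (A.chain t).2.2.2 i i' hi hi' (by rintro rfl; exact hne rfl) hxy
  · exact A.disj t t' htt i i' hi hi' hxy

theorem size_eq_sum (A : BddChainFamily g n k) : A.size = ∑ t, (A.len t + 1) := by
  rw [size, card_biUnion]
  · refine sum_congr rfl fun t _ => ?_
    rw [card_image_of_injOn, card_range]
    intro i hi i' hi' h
    by_contra hne
    simp only [coe_range, Set.mem_Iio] at hi hi'
    exact (A.chain t).2.2.2 i i' (by omega) (by omega) hne (congrArg (· % (n : ℤ)) h)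
  · intro t _ t' _ htt
    rw [Function.onFun_apply, disjoint_left]
    simp only [mem_image, mem_range, Nat.lt_succ_iff]
    rintro _ ⟨i, hi, rfl⟩ ⟨i', hi', h⟩
    exact A.disj t t' htt i i' hi hi' (congrArg (· % (n : ℤ)) h).symm

theorem exists_size_eq {L : ℕ} (len : Fin L → ℕ) (j : Fin L → ℕ → ℤ)
    (hle : ∀ t, ∀ i ≤ len t, j t i ≤ n)
    (hlt : ∀ t i, i + 1 ≤ len t → j t (i + 1) < j t i)
    (hg : ∀ t, ∀ i ≤ len t, g (j t i) = i)
    (hbdd : ∀ t, len t + 1 ≤ k)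
    (hinj : ∀ t t' i i', i ≤ len t → i' ≤ len t' →
      j t i % (n : ℤ) = j t' i' % (n : ℤ) → t = t' ∧ i = i') :
    ∃ A : BddChainFamily g n k, A.size = ∑ t, (len t + 1) := by
  refine ⟨⟨L, len, j, fun t => ⟨hle t, hlt t, hg t, ?_⟩, hbdd, ?_⟩, size_eq_sum _⟩
  · exact fun i i' hi hi' hne h => hne (hinj t t i i' hi hi' h).2
  · exact fun t t' htt i i' hi hi' h => htt (hinj t t' i i' hi hi' h).1

end BddChainFamily

theorem Ik_eq_of_forall_size_le {g : ℤ → ℤ} {n k m : ℕ}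
    (hex : ∃ A : BddChainFamily g n k, A.size = m)
    (hle : ∀ A : BddChainFamily g n k, A.size ≤ m) : Ik g n k = m :=
  IsGreatest.csSup_eq ⟨hex, by rintro _ ⟨A, rfl⟩; exact hle A⟩

/-- For `n = 0` distinct integers have distinct residues, so the zeros of `g` at `0, -1, -2, …`
form arbitrarily large families of one-element chains; `Ik` is then the junk value
`sSup = 0` of an unbounded set. -/
theorem Ik_zero_eq_zero {g : ℤ → ℤ} {k : ℕ} (hk : 1 ≤ k) (hg : ∀ x ≤ 0, g x = 0) :
    Ik g 0 k = 0 := by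
  refine Nat.sSup_of_not_bddAbove fun ⟨M, hM⟩ => ?_
  obtain ⟨A, hA⟩ := BddChainFamily.exists_size_eq (g := g) (n := 0) (k := k) (L := M + 1)
    (fun _ => 0) (fun t _ => -(t : ℤ)) (fun _ _ _ => by simp) (fun _ _ _ => by omega)
    (fun t i hi => by rw [Nat.le_zero.1 hi, hg _ (by omega)]; rfl) (fun _ => hk)
    (fun t t' i i' hi hi' h => ⟨by simpa [Fin.ext_iff] using h, by omega⟩)
  have := hM ⟨A, hA⟩
  simp at this

section ExtFn

variable {w : List ℕ} {n : ℕ}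

theorem extFn_eq (x : ℤ) :
    extFn w n x = ((cochargeLabeling w).getD ((x - 1) % n).toNat 0 : ℤ) - (x - 1) / n := by
  rw [extFn, Int.fdiv_eq_ediv_of_nonneg _ (Int.natCast_nonneg n)]
  rfl

theorem extFn_natCast_add_one {p : ℕ} (hp : p < n) :
    extFn w n (p + 1) = (cochargeLabeling w).getD p 0 := by
  have hp' : (p : ℤ) < n := by exact_mod_cast hp
  rw [extFn_eq, add_sub_cancel_right, Int.emod_eq_of_lt (by positivity) hp',
    Int.ediv_eq_zero_of_lt (by positivity) hp']
  simp

theorem getD_emod_le_extFn (hn : 0 < n) {x : ℤ} (hx : x ≤ n) :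
    ((cochargeLabeling w).getD ((x - 1) % n).toNat 0 : ℤ) ≤ extFn w n x := by
  have : (x - 1) / n < 1 := (Int.ediv_lt_iff_lt_mul (by exact_mod_cast hn)).2 (by omega)
  rw [extFn_eq]
  omega

theorem BddChainFamily.size_le_card_filter {k : ℕ} (hn : 0 < n)
    (A : BddChainFamily (extFn w n) n k) :
    A.size ≤ ((range n).filter fun p => (cochargeLabeling w).getD p 0 < k).card := by
  have hn' : (0 : ℤ) < n := by exact_mod_cast hn
  refine card_le_card_of_injOn (fun x => ((x - 1) % n).toNat) (fun x hx => ?_) ?_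
  · have hlt := A.apply_lt_of_mem_support hx
    have hle := getD_emod_le_extFn (w := w) hn (A.le_of_mem_support hx)
    have := Int.emod_lt_of_pos (x - 1) hn'
    have := Int.emod_nonneg (x - 1) hn'.ne'
    simp only [coe_filter, mem_range, Set.mem_ofPred_eq]
    omega
  · intro x hx y hy hxy
    refine A.injOn_emod_support hx hy ?_
    have := Int.emod_nonneg (x - 1) hn'.ne'
    have := Int.emod_nonneg (y - 1) hn'.ne'
    have h : x - 1 ≡ y - 1 [ZMOD n] := by simp only at hxy; unfold Int.ModEq; omega
    exact (by simpa using h.add_right 1 : x ≡ y [ZMOD n])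

end ExtFn

section RowReading

variable (ν : ℕ → ℕ)

def rowReading (l : ℕ) : List ℕ :=
  ((List.range l).reverse.map fun i => List.replicate (ν i) i).flatten

/-- The row of `i` occupies the positions `blockStart ν l i ≤ p < blockStart ν l i + ν i`. -/
def blockStart (l i : ℕ) : ℕ :=
  ∑ m ∈ Ico (i + 1) l, ν m

theorem rowReading_succ (l : ℕ) :
    rowReading ν (l + 1) = List.replicate (ν l) l ++ rowReading ν l := by
  simp [rowReading, List.range_succ]

theorem length_rowReading (l : ℕ) : (rowReading ν l).length = ∑ i ∈ range l, ν i := by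
  induction l with
  | zero => simp [rowReading]
  | succ l ih => rw [rowReading_succ, sum_range_succ, List.length_append, ih]; simp [add_comm]

theorem le_getD_rowReading {l k p : ℕ} (hp : p < ∑ m ∈ Ico k l, ν m) :
    k ≤ (rowReading ν l).getD p 0 := by
  induction l generalizing p with
  | zero => simp at hp
  | succ l ih =>
    have hk : k ≤ l := by
      by_contra! h
      simp [Ico_eq_empty_of_le (Nat.succ_le_of_lt h)] at hp
    rw [sum_Ico_succ_top hk] at hp
    rw [rowReading_succ]
    rcases lt_or_ge p (ν l) with h | h
    · rw [List.getD_append _ _ _ _ (by simpa using h)]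
      simpa [h] using hk
    · rw [List.getD_append_right _ _ _ _ (by simpa using h), List.length_replicate]
      exact ih (by omega)

theorem getD_rowReading_blockStart_add {l i c : ℕ} (hi : i < l) (hc : c < ν i) :
    (rowReading ν l).getD (blockStart ν l i + c) 0 = i := by
  induction l with
  | zero => omega
  | succ l ih =>
    rw [rowReading_succ, blockStart]
    obtain hi | rfl := Nat.lt_succ_iff_lt_or_eq.1 hi
    · have hshift : ∑ m ∈ Ico (i + 1) l, ν m + ν l + c - ν l = blockStart ν l i + c := by
        rw [blockStart]
        omega
      rw [sum_Ico_succ_top (by omega),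
        List.getD_append_right _ _ _ _ (by rw [List.length_replicate]; omega),
        List.length_replicate, hshift]
      exact ih hi
    · simp only [Ico_self, sum_empty, zero_add]
      rw [List.getD_append _ _ _ _ (by simpa using hc)]
      simp [hc]

theorem blockStart_add_le {l i : ℕ} (hi : i < l) :
    blockStart ν l i + ν i ≤ ∑ m ∈ range l, ν m := by
  rw [blockStart, add_comm, ← sum_eq_sum_Ico_succ_bot hi, range_eq_Ico]
  exact sum_le_sum_of_subset (Ico_subset_Ico (Nat.zero_le i) le_rfl)

theorem blockStart_add_le_blockStart {l i i' : ℕ} (h : i < i') (hi' : i' < l) :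
    blockStart ν l i' + ν i' ≤ blockStart ν l i := by
  rw [blockStart, add_comm, ← sum_eq_sum_Ico_succ_bot hi', blockStart]
  exact sum_le_sum_of_subset (Ico_subset_Ico h le_rfl)

theorem blockStart_add_inj {l i i' c c' : ℕ} (hi : i < l) (hi' : i' < l) (hc : c < ν i)
    (hc' : c' < ν i') (h : blockStart ν l i + c = blockStart ν l i' + c') :
    i = i' ∧ c = c' := by
  rcases lt_trichotomy i i' with hlt | rfl | hlt
  · have := blockStart_add_le_blockStart ν hlt hi'
    omega
  · omega
  · have := blockStart_add_le_blockStart ν hlt hi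
    omega

theorem card_filter_getD_rowReading_lt_le (l k : ℕ) :
    ((range (∑ m ∈ range l, ν m)).filter fun p => (rowReading ν l).getD p 0 < k).card ≤
      ∑ i ∈ range k, ν i := by
  have hsub : (range (∑ m ∈ range l, ν m)).filter (fun p => (rowReading ν l).getD p 0 < k) ⊆
      Ico (∑ m ∈ Ico k l, ν m) (∑ m ∈ range l, ν m) := by
    intro p hp
    simp only [mem_filter, mem_range, mem_Ico] at hp ⊢
    exact ⟨not_lt.1 fun h => (le_getD_rowReading ν h).not_gt hp.2, hp.1⟩
  have hsplit : ∑ m ∈ range l, ν m ≤ ∑ i ∈ range k, ν i + ∑ m ∈ Ico k l, ν m := by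
    rcases le_total k l with h | h
    · rw [sum_range_add_sum_Ico _ h]
    · exact le_add_right (sum_le_sum_of_subset (range_subset_range.2 h))
  have := card_le_card hsub
  rw [Nat.card_Ico] at this
  omega

end RowReading

/-- For each column `c` of the diagram, the entries of the first `min k λ'_c` rows in that column
form a chain inside `[1, n]`, the row of `i + 1` lying to the left of the row of `i`. -/
theorem exists_bddChainFamily_size_eq_sum {ν : ℕ → ℕ} {l n k : ℕ} {w : List ℕ}
    (hν : Antitone ν) (hzero : ∀ i, l ≤ i → ν i = 0) (hn : n = ∑ i ∈ range l, ν i)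
    (hk : 1 ≤ k) (hlab : cochargeLabeling w = rowReading ν l) :
    ∃ A : BddChainFamily (extFn w n) n k, A.size = ∑ i ∈ range k, ν i := by
  set H : ℕ → ℕ := fun c => ((range k).filter fun i => c < ν i).card
  have hH (c i : ℕ) : i < H c ↔ i < k ∧ c < ν i :=
    lt_card_filter_range_iff fun _ _ hab h => h.trans_le (hν hab)
  have hH0 {c : ℕ} (hc : c < ν 0) : 0 < H c := (hH c 0).2 ⟨hk, hc⟩
  have hrow {c : ℕ} (hc : c < ν 0) {i : ℕ} (hi : i ≤ H c - 1) :
      i < k ∧ c < ν i ∧ i < l := by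
    obtain ⟨hik, hci⟩ := (hH c i).1 (by have := hH0 hc; omega)
    exact ⟨hik, hci, not_le.1 fun hli => by simp [hzero i hli] at hci⟩
  have hpos {c : ℕ} (hc : c < ν 0) {i : ℕ} (hi : i ≤ H c - 1) :
      blockStart ν l i + c < n := by
    obtain ⟨-, hci, hil⟩ := hrow hc hi
    have := blockStart_add_le ν hil
    omega
  obtain ⟨A, hA⟩ := BddChainFamily.exists_size_eq (g := extFn w n) (n := n) (k := k)
    (fun c => H c - 1) (fun c i => ((blockStart ν l i + c : ℕ) : ℤ) + 1)
    (fun c i hi => by have := hpos c.2 hi; omega)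
    (fun c i hi => by
      obtain ⟨-, hci, hil⟩ := hrow c.2 hi
      have := blockStart_add_le_blockStart ν i.lt_add_one hil
      omega)
    (fun c i hi => by
      obtain ⟨-, hci, hil⟩ := hrow c.2 hi
      rw [extFn_natCast_add_one (hpos c.2 hi), hlab,
        getD_rowReading_blockStart_add ν hil hci])
    (fun c => by have : H c ≤ k := (card_filter_le _ _).trans_eq (card_range k); omega)
    (fun c c' i i' hi hi' h => by
      obtain ⟨-, hci, hil⟩ := hrow c.2 hi
      obtain ⟨-, hci', hil'⟩ := hrow c'.2 hi'
      obtain ⟨rfl, hcc⟩ := blockStart_add_inj ν hil hil' hci hci'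
        (eq_of_natCast_add_one_emod_eq (hpos c.2 hi) (hpos c'.2 hi') h)
      exact ⟨Fin.ext hcc, rfl⟩)
  refine ⟨A, hA.trans ?_⟩
  calc ∑ c : Fin (ν 0), (H c - 1 + 1) = ∑ c ∈ range (ν 0), H c := by
        rw [Fin.sum_univ_eq_sum_range (fun c => H c - 1 + 1)]
        exact sum_congr rfl fun c hc => Nat.sub_add_cancel (hH0 (mem_range.1 hc))
    _ = ∑ i ∈ range k, ((range (ν 0)).filter fun c => c < ν i).card := by
        simp only [H, card_filter]
        exact sum_comm
    _ = ∑ i ∈ range k, ν i := sum_congr rfl fun i _ => by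
        have hle := hν (Nat.zero_le i)
        have hcol : (range (ν 0)).filter (· < ν i) = range (ν i) := by
          ext c
          simp only [mem_filter, mem_range]
          omega
        rw [hcol, card_range]

-- Parts are 0-indexed: `λ_i = ν (i - 1)`.
theorem Ik_superstandard_general (n l : ℕ) (ν : ℕ → ℕ) (hν : IsPartitionFn ν)
    (hzero : ∀ i, l ≤ i → ν i = 0)
    (hn : n = ∑ i ∈ Finset.range l, ν i)
    (w : List ℕ)
    (hlab : cochargeLabeling w = ((List.range l).reverse.map
      (fun i => List.replicate (ν i) i)).flatten) :
    ∀ k : ℕ, 1 ≤ k → Ik (extFn w n) n k = ∑ i ∈ Finset.range k, ν i := by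
  intro k hk
  change cochargeLabeling w = rowReading ν l at hlab
  rcases Nat.eq_zero_or_pos n with rfl | hn0
  · have hlab0 : cochargeLabeling w = [] := by
      rw [hlab, ← List.length_eq_zero_iff, length_rowReading, ← hn]
    have hν0 (i : ℕ) : ν i = 0 := by
      rcases lt_or_ge i l with hi | hi
      · exact sum_eq_zero_iff.1 hn.symm i (mem_range.2 hi)
      · exact hzero i hi
    rw [sum_eq_zero fun i _ => hν0 i]
    exact Ik_zero_eq_zero hk fun x _ => by simp [extFn, hlab0]
  · refine Ik_eq_of_forall_size_le
      (exists_bddChainFamily_size_eq_sum (antitone_nat_of_succ_le hν.1) hzero hn hk hlab)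
      fun A => (A.size_le_card_filter hn0).trans ?_
    rw [hlab, hn]
    exact card_filter_getD_rowReading_lt_le ν l k

/-- If the cocharge labeling of the standard word `w` of length `n` is the row
reading word of `Z_λ` for a partition `λ` of `n` with `l` parts (read bottom
to top: `λ_l` copies of `l - 1`, …, `λ_2` copies of `1`, `λ_1` copies of `0`;
parts are 0-indexed here, so `λ_i = ν (i - 1)`), then
`I_k(w̃) = λ_1 + ⋯ + λ_k` for every `k ≥ 1`. -/
theorem Ik_superstandard (n l : ℕ) (ν : ℕ → ℕ) (hν : IsPartitionFn ν)
    (hpos : ∀ i < l, 0 < ν i) (hzero : ∀ i, l ≤ i → ν i = 0)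
    (hn : n = ∑ i ∈ Finset.range l, ν i)
    (w : List ℕ) (hw : IsStandardWord n w)
    (hlab : cochargeLabeling w = ((List.range l).reverse.map
      (fun i => List.replicate (ν i) i)).flatten) :
    ∀ k : ℕ, 1 ≤ k → Ik (extFn w n) n k = ∑ i ∈ Finset.range k, ν i :=
  Ik_superstandard_general n l ν hν hzero hn w hlab
end

section
/- Let u be a standard word and v = u s_i a Knuth transformation of u (i.e., u and v differ by a single Knuth move on three consecutive letters). Then cocharge(u) = cocharge(v). -/
/-- An elementary Knuth transformation: replace a consecutive factor `y x z`
by `y z x` when `x < y ≤ z`, or a factor `x z y` by `z x y` when `x ≤ y < z`. -/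
def KnuthMove (u v : List ℕ) : Prop :=
  ∃ (p s : List ℕ) (x y z : ℕ),
    (u = p ++ [y, x, z] ++ s ∧ v = p ++ [y, z, x] ++ s ∧ x < y ∧ y ≤ z) ∨
    (u = p ++ [x, z, y] ++ s ∧ v = p ++ [z, x, y] ++ s ∧ x ≤ y ∧ y < z)

/-!
A Knuth move transposes two adjacent letters whose values differ by at least `2`: the untouched
middle letter lies strictly between them, and the letters of a standard word are distinct. Such a
transposition does not change, for any `i`, whether `i + 1` lies left of `i`, so every label is
unchanged; the cocharge is then the sum of the same labels over a permutation of the same letters.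
-/

section Swap

variable {α : Type*} [DecidableEq α] (p s : List α)

theorem List.idxOf_append_cons_cons (a b m : α) :
    (p ++ a :: b :: s).idxOf m =
      if m ∈ p then p.idxOf m
      else if m = a then p.length
      else if m = b then p.length + 1
      else p.length + 2 + s.idxOf m := by
  by_cases hm : m ∈ p
  · rw [List.idxOf_append_of_mem hm, if_pos hm]
  rw [List.idxOf_append_of_notMem hm, if_neg hm]
  by_cases ha : m = a
  · simp [ha]
  rw [List.idxOf_cons_ne _ (Ne.symm ha), if_neg ha]
  by_cases hb : m = b
  · simp [hb]
  rw [List.idxOf_cons_ne _ (Ne.symm hb), if_neg hb]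
  omega

theorem List.idxOf_lt_idxOf_append_swap_iff {a b m m' : α}
    (hab : ¬(m = a ∧ m' = b)) (hba : ¬(m = b ∧ m' = a)) :
    (p ++ b :: a :: s).idxOf m < (p ++ b :: a :: s).idxOf m' ↔
      (p ++ a :: b :: s).idxOf m < (p ++ a :: b :: s).idxOf m' := by
  have hm : m ∈ p → p.idxOf m < p.length := List.idxOf_lt_length_iff.2
  have hm' : m' ∈ p → p.idxOf m' < p.length := List.idxOf_lt_length_iff.2
  simp only [List.idxOf_append_cons_cons]
  split_ifs <;> simp_all <;> omega

end Swap

theorem entryLabel_congr_s17 {u v : List ℕ}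
    (h : ∀ k : ℕ, u.idxOf (k + 2) < u.idxOf (k + 1) ↔ v.idxOf (k + 2) < v.idxOf (k + 1)) :
    entryLabel u = entryLabel v := by
  funext i
  induction i with
  | zero => rfl
  | succ i ih =>
    match i, ih with
    | 0, _ => rfl
    | j + 1, ih => simp only [entryLabel, ih, h j]

theorem entryLabel_append_swap (p s : List ℕ) {a b : ℕ} (hab : a + 1 ≠ b) (hba : b + 1 ≠ a) :
    entryLabel (p ++ b :: a :: s) = entryLabel (p ++ a :: b :: s) :=
  entryLabel_congr_s17 fun _ =>
    List.idxOf_lt_idxOf_append_swap_iff p s (by omega) (by omega)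

theorem cocharge_append_swap (p s : List ℕ) {a b : ℕ} (hab : a + 1 ≠ b) (hba : b + 1 ≠ a) :
    cocharge (p ++ b :: a :: s) = cocharge (p ++ a :: b :: s) := by
  unfold cocharge cochargeLabeling
  rw [entryLabel_append_swap p s hab hba]
  exact ((List.Perm.swap a b s).append_left p).map _ |>.sum_eq

namespace KnuthMove

variable {u v : List ℕ}

theorem perm (h : KnuthMove u v) : u.Perm v := by
  obtain ⟨p, s, x, y, z, ⟨rfl, rfl, -⟩ | ⟨rfl, rfl, -⟩⟩ := h
  · exact (((List.Perm.swap z x []).cons y).append_left p).append_right s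
  · exact ((List.Perm.swap z x [y]).append_left p).append_right s

theorem cocharge_eq (hu : u.Nodup) (h : KnuthMove u v) : cocharge u = cocharge v := by
  obtain ⟨p, s, x, y, z, ⟨rfl, rfl, hxy, hyz⟩ | ⟨rfl, rfl, hxy, hyz⟩⟩ := h
  · have hne : y ≠ z := by
      rintro rfl
      simpa using hu.sublist (List.infix_append p _ s).sublist
    simpa using (cocharge_append_swap (p ++ [y]) s (a := z) (b := x) (by omega) (by omega))
  · have hne : x ≠ y := by
      rintro rfl
      simpa using hu.sublist (List.infix_append p _ s).sublist
    simpa using (cocharge_append_swap p ([y] ++ s) (a := z) (b := x) (by omega) (by omega))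

end KnuthMove

/-- Knuth transformations preserve cocharge: if the standard words `u` and `v`
differ by a single elementary Knuth transformation (in either direction), then
`cocharge u = cocharge v`. -/
theorem cocharge_knuth (n : ℕ) (u v : List ℕ) (hu : IsStandardWord n u)
    (h : KnuthMove u v ∨ KnuthMove v u) : cocharge u = cocharge v := by
  rcases h with h | h
  · exact h.cocharge_eq hu.nodup
  · exact (h.cocharge_eq (h.perm.nodup_iff.2 hu.nodup)).symm
end
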